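/- arXiv:1207.5469 — 2 statements merged into one kernel-verified Lean document; each statement's English description precedes it below -/
import Mathlib

section
/- S = P_S ∪ L_S is a resolving set of the incidence graph of a finite projective plane if and only if: through any point P there is at most one line outside L_S not blocked by P_S \ {P}, and on any line ℓ there is at most one point outside P_S not covered by L_S \ {ℓ}. -/
/-! In the incidence graph of a projective plane every distance is read off from incidence:
distinct points, and distinct lines, are at distance 2, while a point and a line are at distance
1 or 3 according as they are incident or not. So once `S` is nonempty, parity separates points
from lines. Two distinct points `p`, `q` have the same distances to `S` exactly when neither is in
`S` and every line of `S` other than `pq` misses both, i.e. when both are uncovered points of the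
line `pq`; dually for two lines. Finally, a configuration with two lines through a point shows
that the condition on lines already forces `S ≠ ∅`. -/

open Configuration

variable (P L : Type*) [Membership P L]

/-- The incidence graph of an incidence structure: vertices are points and lines,
with a point adjacent to a line iff it lies on it. -/
def incGraph : SimpleGraph (P ⊕ L) where
  Adj x y := match x, y with
    | .inl p, .inr l => p ∈ l
    | .inr l, .inl p => p ∈ l
    | _, _ => False
  symm := ⟨by rintro (p | l) (p' | l') h <;> simp_all⟩
  loopless := ⟨by rintro (p | l) h <;> simp_all⟩

/-- A set of vertices is resolving if the ordered distance lists to its elements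
distinguish all vertices. -/
def IsResolvingSet (S : Set (P ⊕ L)) : Prop :=
  ∀ x y : P ⊕ L, (∀ s ∈ S, (incGraph P L).dist x s = (incGraph P L).dist y s) → x = y

/-- A vertex `x` is resolved by `S` if no other vertex has the same distance list. -/
def ResolvedBy (S : Set (P ⊕ L)) (x : P ⊕ L) : Prop :=
  ∀ y : P ⊕ L, (∀ s ∈ S, (incGraph P L).dist x s = (incGraph P L).dist y s) → y = x

/-- The metric dimension: the least size of a resolving set. -/
noncomputable def metricDim : ℕ :=
  sInf {n | ∃ S : Finset (P ⊕ L), S.card = n ∧ IsResolvingSet P L ↑S}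

namespace SimpleGraph

variable {V : Type*} {G : SimpleGraph V} {u v w : V}

lemma dist_eq_two_of_adj_of_adj (huv : u ≠ v) (hnadj : ¬G.Adj u v) (huw : G.Adj u w)
    (hwv : G.Adj w v) : G.dist u v = 2 := by
  have hedist : G.edist u v = 2 :=
    edist_eq_two_iff.mpr ⟨huv, hnadj, w, G.mem_commonNeighbors.mpr ⟨huw, hwv.symm⟩⟩
  exact_mod_cast (Walk.cons huw (.cons hwv .nil)).reachable.coe_dist_eq_edist.trans hedist

lemma dist_eq_three_of_commonNeighbors_eq_empty (huv : u ≠ v) (hnadj : ¬G.Adj u v)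
    (hcommon : G.commonNeighbors u v = ∅) (p : G.Walk u v) (hp : p.length = 3) :
    G.dist u v = 3 := by
  have hlt : 2 < G.edist u v := two_lt_edist_iff.mpr ⟨huv, hnadj, hcommon⟩
  rw [← p.reachable.coe_dist_eq_edist, Nat.ofNat_lt_cast] at hlt
  exact le_antisymm (hp ▸ G.dist_le p) hlt

end SimpleGraph

section IncidenceGraph

variable {P L}

open scoped Classical

@[simp]
lemma incGraph_adj_inl_inr {p : P} {l : L} : (incGraph P L).Adj (.inl p) (.inr l) ↔ p ∈ l :=
  Iff.rfl

@[simp]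
lemma incGraph_adj_inr_inl {p : P} {l : L} : (incGraph P L).Adj (.inr l) (.inl p) ↔ p ∈ l :=
  Iff.rfl

@[simp]
lemma incGraph_not_adj_inl_inl {p q : P} : ¬(incGraph P L).Adj (.inl p) (.inl q) :=
  id

@[simp]
lemma incGraph_not_adj_inr_inr {l m : L} : ¬(incGraph P L).Adj (.inr l) (.inr m) :=
  id

lemma incGraph_commonNeighbors_inl_inr (p : P) (l : L) :
    (incGraph P L).commonNeighbors (.inl p) (.inr l) = ∅ := by
  ext (q | m) <;> simp [SimpleGraph.mem_commonNeighbors]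

lemma incGraph_dist_inl_inl [HasLines P L] (p q : P) :
    (incGraph P L).dist (.inl p) (.inl q) = if p = q then 0 else 2 := by
  split_ifs with hpq
  · simp [hpq]
  · have hline := HasLines.mkLine_ax (L := L) hpq
    exact SimpleGraph.dist_eq_two_of_adj_of_adj (Sum.inl_injective.ne hpq) incGraph_not_adj_inl_inl
      (incGraph_adj_inl_inr.mpr hline.1) (incGraph_adj_inr_inl.mpr hline.2)

lemma incGraph_dist_inr_inr [HasPoints P L] (l m : L) :
    (incGraph P L).dist (.inr l) (.inr m) = if l = m then 0 else 2 := by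
  split_ifs with hlm
  · simp [hlm]
  · have hpoint := HasPoints.mkPoint_ax (P := P) hlm
    exact SimpleGraph.dist_eq_two_of_adj_of_adj (Sum.inr_injective.ne hlm) incGraph_not_adj_inr_inr
      (incGraph_adj_inr_inl.mpr hpoint.1) (incGraph_adj_inl_inr.mpr hpoint.2)

lemma Configuration.ProjectivePlane.exists_point_mem [ProjectivePlane P L] (l : L) :
    ∃ p : P, p ∈ l := by
  obtain ⟨-, p, -, -, l', -, -, -, -, hp, -, -, -, -⟩ :=
    ProjectivePlane.exists_config (P := P) (L := L)
  by_cases hl : l = l'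
  · exact ⟨p, hl ▸ hp⟩
  · exact ⟨_, (HasPoints.mkPoint_ax hl).1⟩

lemma incGraph_dist_inl_inr [ProjectivePlane P L] (p : P) (l : L) :
    (incGraph P L).dist (.inl p) (.inr l) = if p ∈ l then 1 else 3 := by
  split_ifs with hpl
  · exact SimpleGraph.dist_eq_one_iff_adj.mpr hpl
  obtain ⟨q, hql⟩ := ProjectivePlane.exists_point_mem l
  have hpq : p ≠ q := fun h => hpl (h ▸ hql)
  have hline := HasLines.mkLine_ax (L := L) hpq
  exact SimpleGraph.dist_eq_three_of_commonNeighbors_eq_empty Sum.inl_ne_inr hpl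
    (incGraph_commonNeighbors_inl_inr p l)
    (.cons (incGraph_adj_inl_inr.mpr hline.1)
      (.cons (incGraph_adj_inr_inl.mpr hline.2) (.cons (incGraph_adj_inl_inr.mpr hql) .nil))) rfl

lemma incGraph_dist_inr_inl [ProjectivePlane P L] (l : L) (p : P) :
    (incGraph P L).dist (.inr l) (.inl p) = if p ∈ l then 1 else 3 := by
  rw [SimpleGraph.dist_comm, incGraph_dist_inl_inr]

end IncidenceGraph

section ResolvingSets

variable {P L}

def unblockedLinesThrough (S : Set (P ⊕ L)) (p : P) : Set L :=
  {l | Sum.inr l ∉ S ∧ p ∈ l ∧ ∀ x : P, Sum.inl x ∈ S → x ≠ p → x ∉ l}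

def uncoveredPointsOn (S : Set (P ⊕ L)) (l : L) : Set P :=
  {p | Sum.inl p ∉ S ∧ p ∈ l ∧ ∀ m : L, Sum.inr m ∈ S → m ≠ l → p ∉ m}

variable [ProjectivePlane P L] {S : Set (P ⊕ L)}

lemma incGraph_dist_inl_ne_dist_inr (p : P) (l : L) (s : P ⊕ L) :
    (incGraph P L).dist (.inl p) s ≠ (incGraph P L).dist (.inr l) s := by
  rcases s with q | m
  · rw [incGraph_dist_inl_inl, incGraph_dist_inr_inl]
    split_ifs <;> omega
  · rw [incGraph_dist_inl_inr, incGraph_dist_inr_inr]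
    split_ifs <;> omega

lemma mem_uncoveredPointsOn_of_forall_dist_eq {p q : P} {l : L} (hpq : p ≠ q) (hp : p ∈ l)
    (hq : q ∈ l)
    (h : ∀ s ∈ S, (incGraph P L).dist (.inl p) s = (incGraph P L).dist (.inl q) s) :
    p ∈ uncoveredPointsOn S l := by
  refine ⟨fun hpS => ?_, hp, fun m hmS hml hpm => ?_⟩
  · simpa [incGraph_dist_inl_inl, Ne.symm hpq] using h _ hpS
  · have hqm : q ∈ m := by
      by_contra hqm
      simpa [incGraph_dist_inl_inr, hpm, hqm] using h _ hmS
    exact hml ((Nondegenerate.eq_or_eq hp hq hpm hqm).resolve_left hpq).symm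

lemma mem_unblockedLinesThrough_of_forall_dist_eq {l m : L} {p : P} (hlm : l ≠ m) (hl : p ∈ l)
    (hm : p ∈ m)
    (h : ∀ s ∈ S, (incGraph P L).dist (.inr l) s = (incGraph P L).dist (.inr m) s) :
    l ∈ unblockedLinesThrough S p := by
  refine ⟨fun hlS => ?_, hl, fun x hxS hxp hxl => ?_⟩
  · simpa [incGraph_dist_inr_inr, Ne.symm hlm] using h _ hlS
  · have hxm : x ∈ m := by
      by_contra hxm
      simpa [incGraph_dist_inr_inl, hxl, hxm] using h _ hxS
    exact hxp ((Nondegenerate.eq_or_eq hxl hl hxm hm).resolve_right hlm)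

lemma forall_dist_inl_eq_iff {p q : P} {l : L} (hpq : p ≠ q) (hp : p ∈ l) (hq : q ∈ l) :
    (∀ s ∈ S, (incGraph P L).dist (.inl p) s = (incGraph P L).dist (.inl q) s) ↔
      p ∈ uncoveredPointsOn S l ∧ q ∈ uncoveredPointsOn S l := by
  refine ⟨fun h => ⟨mem_uncoveredPointsOn_of_forall_dist_eq hpq hp hq h,
    mem_uncoveredPointsOn_of_forall_dist_eq hpq.symm hq hp fun s hs => (h s hs).symm⟩, ?_⟩
  rintro ⟨⟨hpS, -, hpU⟩, ⟨hqS, -, hqU⟩⟩ (x | m) hs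
  · have hpx : p ≠ x := fun h => hpS (h ▸ hs)
    have hqx : q ≠ x := fun h => hqS (h ▸ hs)
    simp [incGraph_dist_inl_inl, hpx, hqx]
  · by_cases hml : m = l
    · simp [incGraph_dist_inl_inr, hml, hp, hq]
    · simp [incGraph_dist_inl_inr, hpU m hs hml, hqU m hs hml]

lemma forall_dist_inr_eq_iff {l m : L} {p : P} (hlm : l ≠ m) (hl : p ∈ l) (hm : p ∈ m) :
    (∀ s ∈ S, (incGraph P L).dist (.inr l) s = (incGraph P L).dist (.inr m) s) ↔
      l ∈ unblockedLinesThrough S p ∧ m ∈ unblockedLinesThrough S p := by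
  refine ⟨fun h => ⟨mem_unblockedLinesThrough_of_forall_dist_eq hlm hl hm h,
    mem_unblockedLinesThrough_of_forall_dist_eq hlm.symm hm hl fun s hs => (h s hs).symm⟩, ?_⟩
  rintro ⟨⟨hlS, -, hlU⟩, ⟨hmS, -, hmU⟩⟩ (x | n) hs
  · by_cases hxp : x = p
    · simp [incGraph_dist_inr_inl, hxp, hl, hm]
    · simp [incGraph_dist_inr_inl, hlU x hs hxp, hmU x hs hxp]
  · have hln : l ≠ n := fun h => hlS (h ▸ hs)
    have hmn : m ≠ n := fun h => hmS (h ▸ hs)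
    simp [incGraph_dist_inr_inr, hln, hmn]

lemma eq_of_forall_dist_inl_eq (hS : ∀ l : L, (uncoveredPointsOn S l).Subsingleton) {p q : P}
    (h : ∀ s ∈ S, (incGraph P L).dist (.inl p) s = (incGraph P L).dist (.inl q) s) : p = q := by
  by_contra hpq
  have hline := HasLines.mkLine_ax (L := L) hpq
  obtain ⟨hp, hq⟩ := (forall_dist_inl_eq_iff hpq hline.1 hline.2).1 h
  exact hpq (hS _ hp hq)

lemma eq_of_forall_dist_inr_eq (hS : ∀ p : P, (unblockedLinesThrough S p).Subsingleton) {l m : L}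
    (h : ∀ s ∈ S, (incGraph P L).dist (.inr l) s = (incGraph P L).dist (.inr m) s) : l = m := by
  by_contra hlm
  have hpoint := HasPoints.mkPoint_ax (P := P) hlm
  obtain ⟨hl, hm⟩ := (forall_dist_inr_eq_iff hlm hpoint.1 hpoint.2).1 h
  exact hlm (hS _ hl hm)

lemma nonempty_of_forall_unblockedLinesThrough_subsingleton
    (hS : ∀ p : P, (unblockedLinesThrough S p).Subsingleton) : S.Nonempty := by
  obtain ⟨-, p, q, -, l, m, -, -, -, hpl, hpm, -, hql, hqm⟩ :=
    ProjectivePlane.exists_config (P := P) (L := L)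
  rw [Set.nonempty_iff_ne_empty]
  rintro rfl
  have hlm : l = m :=
    hS p ⟨id, hpl, fun _ hx => hx.elim⟩ ⟨id, hpm, fun _ hx => hx.elim⟩
  exact hqm (hlm ▸ hql)

end ResolvingSets

theorem isResolvingSet_iff_PA_PA'_general
    {P L : Type*} [Membership P L] [ProjectivePlane P L]
    (S : Set (P ⊕ L)) :
    IsResolvingSet P L S ↔
      -- PA: through any point p at most one line outside L_S not blocked by P_S \ {p}
      (∀ p : P,
        ({l : L | Sum.inr l ∉ S ∧ p ∈ l ∧
          ∀ x : P, Sum.inl x ∈ S → x ≠ p → x ∉ l}).Subsingleton) ∧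
      -- PA': on any line l at most one point outside P_S not covered by L_S \ {l}
      (∀ l : L,
        ({p : P | Sum.inl p ∉ S ∧ p ∈ l ∧
          ∀ m : L, Sum.inr m ∈ S → m ≠ l → p ∉ m}).Subsingleton) := by
  refine ⟨fun hres => ⟨fun p l hl m hm => ?_, fun l p hp q hq => ?_⟩,
    fun ⟨hPA, hPA'⟩ => ?_⟩
  · by_contra hlm
    exact hlm <| Sum.inr_injective <|
      hres _ _ ((forall_dist_inr_eq_iff hlm hl.2.1 hm.2.1).2 ⟨hl, hm⟩)
  · by_contra hpq
    exact hpq <| Sum.inl_injective <|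
      hres _ _ ((forall_dist_inl_eq_iff hpq hp.2.1 hq.2.1).2 ⟨hp, hq⟩)
  obtain ⟨s, hs⟩ := nonempty_of_forall_unblockedLinesThrough_subsingleton hPA
  rintro (p | l) (q | m) h
  · exact congrArg Sum.inl (eq_of_forall_dist_inl_eq hPA' h)
  · exact (incGraph_dist_inl_ne_dist_inr p m s (h s hs)).elim
  · exact (incGraph_dist_inl_ne_dist_inr q l s (h s hs).symm).elim
  · exact congrArg Sum.inr (eq_of_forall_dist_inr_eq hPA h)

/-- characterization of resolving sets by properties PA and PA'. -/
theorem isResolvingSet_iff_PA_PA'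
    {P L : Type*} [Membership P L] [ProjectivePlane P L] [Finite P] [Finite L]
    (S : Set (P ⊕ L)) :
    IsResolvingSet P L S ↔
      -- PA: through any point p at most one line outside L_S not blocked by P_S \ {p}
      (∀ p : P,
        ({l : L | Sum.inr l ∉ S ∧ p ∈ l ∧
          ∀ x : P, Sum.inl x ∈ S → x ≠ p → x ∉ l}).Subsingleton) ∧
      -- PA': on any line l at most one point outside P_S not covered by L_S \ {l}
      (∀ l : L,
        ({p : P | Sum.inl p ∉ S ∧ p ∈ l ∧
          ∀ m : L, Sum.inr m ∈ S → m ≠ l → p ∉ m}).Subsingleton) :=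
  isResolvingSet_iff_PA_PA'_general S
end

section
/- Every semi-resolving set in a projective plane of order q has size at least 2q − 1. -/
open Configuration

variable (P L : Type*) [Membership P L]

/-- A set of points is a semi-resolving set if the ordered distance lists (in the
incidence graph) to its elements distinguish all lines. -/
def IsSemiResolvingSet (S : Set P) : Prop :=
  ∀ l m : L,
    (∀ p ∈ S, (incGraph P L).dist (Sum.inr l) (Sum.inl p) =
      (incGraph P L).dist (Sum.inr m) (Sum.inl p)) → l = m

/-- A double blocking set: every line contains at least two of its points. -/
def IsDoubleBlocking (B : Set P) : Prop :=
  ∀ l : L, 2 ≤ ({p ∈ B | p ∈ l}).ncard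

/-- τ₂ : the minimum size of a double blocking set. -/
noncomputable def tau2 : ℕ :=
  sInf {n | ∃ B : Finset P, B.card = n ∧ IsDoubleBlocking P L ↑B}

/-- μ_S : the minimum size of a semi-resolving set. -/
noncomputable def muS : ℕ :=
  sInf {n | ∃ S : Finset P, S.card = n ∧ IsSemiResolvingSet P L ↑S}

/-!
In a projective plane the incidence graph is bipartite and has diameter 3, so the distance from
a line to a point is 1 or 3 according to incidence; a semi-resolving set `S` is therefore one whose
traces `S ∩ l` determine the lines `l`. At most one line then misses `S` and at most `|S|` lines
meet it in a single point, while the traces have total size `|S| (q + 1)`. Counting two points for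
every other line gives `2 (q² + q + 1) ≤ |S| (q + 1) + |S| + 2`, that is `|S| (q + 2) ≥ 2q (q + 1)`,
which fails for `|S| ≤ 2q - 2`.
-/

open Finset SimpleGraph

namespace Finset

variable {ι α : Type*} [Fintype ι] {s : Finset α} {f : ι → Finset α}

theorem card_filter_card_eq_le_choose (hf : Function.Injective f) (hfs : ∀ i, f i ⊆ s) (k : ℕ) :
    #{i | #(f i) = k} ≤ (#s).choose k := by
  rw [← card_powersetCard]
  refine card_le_card_of_injOn f (fun i hi => ?_) hf.injOn
  exact mem_powersetCard.2 ⟨hfs i, (mem_filter.1 hi).2⟩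

theorem two_mul_card_le_sum_card_add (hf : Function.Injective f) (hfs : ∀ i, f i ⊆ s) :
    2 * Fintype.card ι ≤ ∑ i, #(f i) + #s + 2 := by
  have hpointwise : ∀ i, 2 ≤ #(f i) + (if #(f i) = 1 then 1 else 0)
      + 2 * (if #(f i) = 0 then 1 else 0) := fun i => by split_ifs <;> omega
  have hsingletons := card_filter_card_eq_le_choose hf hfs 1
  have hempty := card_filter_card_eq_le_choose hf hfs 0
  rw [Nat.choose_one_right] at hsingletons
  rw [Nat.choose_zero_right] at hempty
  calc 2 * Fintype.card ι = ∑ _i : ι, 2 := by simp [mul_comm]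
    _ ≤ ∑ i, (#(f i) + (if #(f i) = 1 then 1 else 0) + 2 * (if #(f i) = 0 then 1 else 0)) :=
      sum_le_sum fun i _ => hpointwise i
    _ = ∑ i, #(f i) + #{i | #(f i) = 1} + 2 * #{i | #(f i) = 0} := by
      simp only [sum_add_distrib, ← mul_sum, sum_boole, Nat.cast_id]
    _ ≤ ∑ i, #(f i) + #s + 2 := by omega

end Finset

namespace incGraph

variable {P L : Type*} [Membership P L]

theorem adj_inr_inl {l : L} {p : P} : (incGraph P L).Adj (.inr l) (.inl p) ↔ p ∈ l := Iff.rfl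

theorem adj_inl_inr {p : P} {l : L} : (incGraph P L).Adj (.inl p) (.inr l) ↔ p ∈ l := Iff.rfl

def sideColoring : (incGraph P L).Coloring Bool :=
  Coloring.mk Sum.isRight <| by rintro (p | l) (p' | l') h <;> simp_all [incGraph]

theorem odd_dist_inr_inl {l : L} {p : P} (h : (incGraph P L).Reachable (.inr l) (.inl p)) :
    Odd ((incGraph P L).dist (.inr l) (.inl p)) := by
  obtain ⟨w, hw⟩ := h.exists_walk_length_eq_dist
  rw [← hw, sideColoring.odd_length_iff_not_congr]
  exact iff_of_false (fun h => h rfl) Bool.false_ne_true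

theorem dist_inr_inl_eq_three [HasLines P L] {l : L} {p r : P} (hr : r ∈ l) (hp : p ∉ l) :
    (incGraph P L).dist (.inr l) (.inl p) = 3 := by
  have hpr : p ≠ r := fun h => hp (h ▸ hr)
  obtain ⟨hpm, hrm⟩ := HasLines.mkLine_ax (L := L) hpr
  let w : (incGraph P L).Walk (.inr l) (.inl p) :=
    .cons (adj_inr_inl.2 hr) (.cons (adj_inl_inr.2 hrm) (.cons (adj_inr_inl.2 hpm) .nil))
  have hle : (incGraph P L).dist (.inr l) (.inl p) ≤ 3 := dist_le w
  have hne : (incGraph P L).dist (.inr l) (.inl p) ≠ 1 := fun h => hp (dist_eq_one_iff_adj.1 h)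
  obtain ⟨k, hk⟩ := odd_dist_inr_inl ⟨w⟩
  omega

end incGraph

namespace Configuration.ProjectivePlane

variable {P L : Type*} [Membership P L] [ProjectivePlane P L] [Finite P] [Finite L]

theorem exists_mem (l : L) : ∃ p : P, p ∈ l := by
  have h : 0 < pointCount P l := by rw [pointCount_eq P l]; omega
  obtain ⟨⟨p, hp⟩⟩ := (Nat.card_pos_iff.1 h).1
  exact ⟨p, hp⟩

open scoped Classical in
theorem incGraph_dist_inr_inl (l : L) (p : P) :
    (incGraph P L).dist (.inr l) (.inl p) = if p ∈ l then 1 else 3 := by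
  split_ifs with hp
  · exact dist_eq_one_iff_adj.2 hp
  · obtain ⟨r, hr⟩ := exists_mem (P := P) l
    exact incGraph.dist_inr_inl_eq_three hr hp

open scoped Classical in
theorem injective_trace_of_isSemiResolvingSet {S : Finset P}
    (hS : IsSemiResolvingSet P L S) : Function.Injective fun l : L => {p ∈ S | p ∈ l} := by
  intro l m hlm
  refine hS l m fun p hp => ?_
  have hiff : p ∈ l ↔ p ∈ m := by
    simpa [mem_coe.1 hp] using congrArg (p ∈ ·) hlm
  simp only [incGraph_dist_inr_inl, hiff]

open scoped Classical in
theorem sum_card_filter_mem [Fintype L] (S : Finset P) :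
    ∑ l : L, #{p ∈ S | p ∈ l} = #S * (order P L + 1) := by
  have hlines : ∀ p : P, #{l : L | p ∈ l} = order P L + 1 := fun p => by
    rw [← lineCount_eq (L := L) p, lineCount, Nat.card_eq_fintype_card, Fintype.card_subtype]
  have hdouble := sum_card_bipartiteAbove_eq_sum_card_bipartiteBelow (s := univ) (t := S)
    (r := fun (l : L) (p : P) => p ∈ l)
  simp only [bipartiteAbove, bipartiteBelow] at hdouble
  rw [hdouble, sum_congr rfl fun p _ => hlines p, sum_const, smul_eq_mul]

end Configuration.ProjectivePlane

/-- every semi-resolving set of a projective plane of order q has size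
at least 2q - 1. -/
theorem semiResolvingSet_lower_bound
    {P L : Type*} [Membership P L] [ProjectivePlane P L] [Finite P] [Finite L]
    (S : Set P) (hS : IsSemiResolvingSet P L S) :
    2 * ProjectivePlane.order P L - 1 ≤ S.ncard := by
  classical
  cases nonempty_fintype L
  obtain ⟨T, rfl⟩ := S.toFinite.exists_finset_coe
  have hcount := two_mul_card_le_sum_card_add
    (ProjectivePlane.injective_trace_of_isSemiResolvingSet hS) fun l => filter_subset _ T
  rw [ProjectivePlane.card_lines P L, ProjectivePlane.sum_card_filter_mem] at hcount
  rw [Set.ncard_coe_finset]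
  set q := ProjectivePlane.order P L
  have hq : 1 < q := ProjectivePlane.one_lt_order P L
  by_contra! hsmall
  have hbound : (#T + 2) * (q + 2) ≤ 2 * q * (q + 2) := Nat.mul_le_mul_right _ (by omega)
  nlinarith
end
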